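/- For any forest F and string-like indices i ≤ j, if T2[i,j) ⊆ T2[i',j') (i.e., i' ≤ i ≤ j ≤ j'), then sim(F, T2[i,j)) ≤ sim(F, T2[i',j')). That is, the similarity matrix S(F) is row-monotone (non-decreasing along each row) and column-monotone (non-increasing down each column). -/

import Mathlib

/-- Ordered rooted trees with node labels from `α`. -/
inductive Tree' (α : Type) : Type
  | node (label : α) (children : List (Tree' α))

/-- An ordered forest is an ordered list of trees. -/
abbrev Forest (α : Type) := List (Tree' α)

mutual
/-- Number of nodes of a tree. -/
def Tree'.size {α : Type} : Tree' α → ℕ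
  | .node _ cs => 1 + Forest.size cs
/-- Number of nodes of a forest. -/
def Forest.size {α : Type} : Forest α → ℕ
  | [] => 0
  | t :: ts => Tree'.size t + Forest.size ts
end

/-- A single edit operation on a forest: delete a node (promoting its children, in
order, to its parent) or relabel a node. -/
inductive EditStep {α : Type} : Forest α → Forest α → Prop
  | delete (pre : Forest α) (a : α) (cs post : Forest α) :
      EditStep (pre ++ Tree'.node a cs :: post) (pre ++ cs ++ post)
  | relabel (pre : Forest α) (a b : α) (cs post : Forest α) :
      EditStep (pre ++ Tree'.node a cs :: post) (pre ++ Tree'.node b cs :: post)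
  | inside (pre : Forest α) (a : α) {cs cs' : Forest α} (post : Forest α) :
      EditStep cs cs' →
      EditStep (pre ++ Tree'.node a cs :: post) (pre ++ Tree'.node a cs' :: post)

/-- `EditSteps n F G`: `G` is obtained from `F` by exactly `n` edit operations. -/
inductive EditSteps {α : Type} : ℕ → Forest α → Forest α → Prop
  | refl (F : Forest α) : EditSteps 0 F F
  | tail {n : ℕ} {F G H : Forest α} : EditSteps n F G → EditStep G H → EditSteps (n + 1) F H

/-- The (unweighted) tree edit distance: the minimum total number of relabelings
and deletions applied to `F1` and `F2` so that they become identical. -/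
noncomputable def ed {α : Type} (F1 F2 : Forest α) : ℕ :=
  sInf {k | ∃ (k1 k2 : ℕ) (G : Forest α), k = k1 + k2 ∧ EditSteps k1 F1 G ∧ EditSteps k2 F2 G}

/-- The similarity between two forests. -/
noncomputable def sim {α : Type} (F1 F2 : Forest α) : ℤ :=
  (Forest.size F1 : ℤ) + Forest.size F2 - ed F1 F2

mutual
/-- Helper for the subforest operation: the part of tree `t`, whose bi-order
traversal interval starts at position `p`, surviving the restriction to positions `[l, r)`.
A node is kept iff both of its occurrences lie at positions `l, …, r - 1`;
removed nodes have their children promoted. -/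
def cutT {α : Type} (l r p : ℕ) : Tree' α → Forest α
  | .node a cs =>
      if l ≤ p ∧ p + 2 * Tree'.size (Tree'.node a cs) ≤ r then [Tree'.node a cs]
      else cutF l r (p + 1) cs
/-- The part of forest `F`, whose bi-order traversal starts at position `p`,
surviving the restriction to positions `[l, r)`. -/
def cutF {α : Type} (l r p : ℕ) : Forest α → Forest α
  | [] => []
  | t :: ts => cutT l r p t ++ cutF l r (p + 2 * Tree'.size t) ts
end

/-- The subforest `F[l, r)` determined by the interval `[l, r)` of the (1-indexed)
bi-order traversal sequence of `F`. -/
def subforest {α : Type} (F : Forest α) (l r : ℕ) : Forest α := cutF l r 1 F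

/-- `OccF F base p t`: the forest `F`, whose bi-order traversal starts at position `base`,
has a node with subtree `t` whose first occurrence is at position `p`. -/
inductive OccF {α : Type} : Forest α → ℕ → ℕ → Tree' α → Prop
  | head (a : α) (cs ts : Forest α) (base : ℕ) :
      OccF (Tree'.node a cs :: ts) base base (Tree'.node a cs)
  | inChildren {cs : Forest α} {p : ℕ} {t : Tree' α} (a : α) (ts : Forest α) (base : ℕ) :
      OccF cs (base + 1) p t → OccF (Tree'.node a cs :: ts) base p t
  | inRest {ts : Forest α} {p : ℕ} {t : Tree' α} (t0 : Tree' α) (base : ℕ) :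
      OccF ts (base + 2 * Tree'.size t0) p t → OccF (t0 :: ts) base p t

/-- The label of the root of a tree. -/
def Tree'.label {α : Type} : Tree' α → α
  | .node a _ => a

/-- A node occurrence `(p, t)` (first occurrence at position `p`, subtree `t`) is a strict
ancestor of the occurrence `(q, s)`. -/
def Anc {α : Type} (u v : ℕ × Tree' α) : Prop :=
  u.1 < v.1 ∧ v.1 + 2 * Tree'.size v.2 ≤ u.1 + 2 * Tree'.size u.2

/-- The node occurrence `u` precedes the node occurrence `v`: `r(u) ≤ l(v)`. -/
def Prec {α : Type} (u v : ℕ × Tree' α) : Prop :=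
  u.1 + 2 * Tree'.size u.2 ≤ v.1

/-!
Shrinking the window `[i', j')` to `[i, j)` can only remove nodes of `T2`, since a node is
kept exactly when its interval lies inside the window; so `T2[i, j)` arises from
`T2[i', j')` by deletions alone. Each deletion lowers the size by one and raises the edit
distance to `F` by at most one (an optimal script for the smaller forest, preceded by that
deletion, is a script for the larger one), so the similarity cannot drop.
-/

open Relation

section Deletion

variable {α : Type}

theorem Forest.size_append (A B : Forest α) :
    Forest.size (A ++ B) = Forest.size A + Forest.size B := by
  induction A with
  | nil => simp [Forest.size]
  | cons t ts ih => simp only [List.cons_append, Forest.size, ih]; omega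

inductive DelStep : Forest α → Forest α → Prop
  | delete (pre : Forest α) (a : α) (cs post : Forest α) :
      DelStep (pre ++ Tree'.node a cs :: post) (pre ++ cs ++ post)
  | inside (pre : Forest α) (a : α) {cs cs' : Forest α} (post : Forest α) :
      DelStep cs cs' →
      DelStep (pre ++ Tree'.node a cs :: post) (pre ++ Tree'.node a cs' :: post)

def Dels (F G : Forest α) : Prop := ReflTransGen DelStep F G

theorem DelStep.editStep {F G : Forest α} (h : DelStep F G) : EditStep F G := by
  induction h with
  | delete pre a cs post => exact .delete pre a cs post
  | inside pre a post _ ih => exact .inside pre a post ih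

theorem DelStep.size_eq {F G : Forest α} (h : DelStep F G) :
    Forest.size F = Forest.size G + 1 := by
  induction h with
  | delete pre a cs post =>
      simp only [Forest.size_append, Forest.size, Tree'.size]; omega
  | inside pre a post _ ih =>
      simp only [Forest.size_append, Forest.size, Tree'.size, ih]; omega

theorem DelStep.append_left (A : Forest α) {B B' : Forest α} (h : DelStep B B') :
    DelStep (A ++ B) (A ++ B') := by
  cases h with
  | delete pre a cs post => simpa using DelStep.delete (A ++ pre) a cs post
  | inside pre a post h => simpa using DelStep.inside (A ++ pre) a post h

theorem DelStep.append_right {A A' : Forest α} (B : Forest α) (h : DelStep A A') :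
    DelStep (A ++ B) (A' ++ B) := by
  cases h with
  | delete pre a cs post => simpa using DelStep.delete pre a cs (post ++ B)
  | inside pre a post h => simpa using DelStep.inside pre a (post ++ B) h

theorem delStep_singleton_node (a : α) (cs : Forest α) : DelStep [Tree'.node a cs] cs := by
  simpa using DelStep.delete [] a cs []

theorem Dels.append {A A' B B' : Forest α} (hA : Dels A A') (hB : Dels B B') :
    Dels (A ++ B) (A' ++ B') :=
  (hA.lift (· ++ B) fun _ _ h => h.append_right B).trans
    (hB.lift (A' ++ ·) fun _ _ h => h.append_left A')

mutual
theorem dels_singleton_nil (t : Tree' α) : Dels [t] [] :=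
  match t with
  | .node a cs => (ReflTransGen.single (delStep_singleton_node a cs)).trans (dels_nil cs)
theorem dels_nil (F : Forest α) : Dels F [] :=
  match F with
  | [] => .refl
  | t :: ts => by simpa using (dels_singleton_nil t).append (dels_nil ts)
end

theorem Dels.exists_editSteps {F G : Forest α} (h : Dels F G) : ∃ n, EditSteps n F G := by
  induction h with
  | refl => exact ⟨0, .refl F⟩
  | tail _ hstep ih =>
      obtain ⟨n, hn⟩ := ih
      exact ⟨n + 1, hn.tail hstep.editStep⟩

end Deletion

section EditDistance

variable {α : Type}

theorem EditSteps.trans {m n : ℕ} {A B C : Forest α}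
    (h₁ : EditSteps m A B) (h₂ : EditSteps n B C) : EditSteps (m + n) A C := by
  induction h₂ with
  | refl => exact h₁
  | tail _ hstep ih => exact (ih h₁).tail hstep

theorem ed_attained (F₁ F₂ : Forest α) :
    ∃ (k₁ k₂ : ℕ) (G : Forest α), ed F₁ F₂ = k₁ + k₂ ∧ EditSteps k₁ F₁ G ∧ EditSteps k₂ F₂ G := by
  refine Nat.sInf_mem (s := {k | ∃ (k₁ k₂ : ℕ) (G : Forest α),
    k = k₁ + k₂ ∧ EditSteps k₁ F₁ G ∧ EditSteps k₂ F₂ G}) ?_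
  obtain ⟨n₁, h₁⟩ := (dels_nil F₁).exists_editSteps
  obtain ⟨n₂, h₂⟩ := (dels_nil F₂).exists_editSteps
  exact ⟨n₁ + n₂, n₁, n₂, [], rfl, h₁, h₂⟩

theorem ed_le {F₁ F₂ G : Forest α} {k₁ k₂ : ℕ}
    (h₁ : EditSteps k₁ F₁ G) (h₂ : EditSteps k₂ F₂ G) : ed F₁ F₂ ≤ k₁ + k₂ :=
  Nat.sInf_le ⟨k₁, k₂, G, rfl, h₁, h₂⟩

theorem ed_le_ed_add_one_of_editStep (F : Forest α) {G H : Forest α} (h : EditStep G H) :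
    ed F G ≤ ed F H + 1 := by
  obtain ⟨k₁, k₂, K, hk, h₁, h₂⟩ := ed_attained F H
  have := ed_le h₁ (((EditSteps.refl G).tail h).trans h₂)
  omega

theorem sim_le_sim_of_dels (F : Forest α) {G H : Forest α} (h : Dels G H) :
    sim F H ≤ sim F G := by
  induction h with
  | refl => exact le_rfl
  | tail _ hstep ih =>
      have hed := ed_le_ed_add_one_of_editStep F hstep.editStep
      have hsize := hstep.size_eq
      refine le_trans ?_ ih
      simp only [sim]
      omega

end EditDistance

section Subforest

variable {α : Type}

mutual
theorem dels_cutT (l r p : ℕ) (t : Tree' α) : Dels [t] (cutT l r p t) :=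
  match t with
  | .node a cs => by
      rw [cutT]
      split
      · exact .refl
      · exact (ReflTransGen.single (delStep_singleton_node a cs)).trans (dels_cutF l r (p + 1) cs)
theorem dels_cutF (l r p : ℕ) (F : Forest α) : Dels F (cutF l r p F) :=
  match F with
  | [] => .refl
  | t :: ts => by
      simpa [cutF] using (dels_cutT l r p t).append (dels_cutF l r (p + 2 * Tree'.size t) ts)
end

mutual
theorem cutT_dels_cutT {i i' j j' : ℕ} (hii : i' ≤ i) (hjj : j ≤ j') (p : ℕ) (t : Tree' α) :
    Dels (cutT i' j' p t) (cutT i j p t) :=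
  match t with
  | .node a cs => by
      rw [cutT, cutT]
      by_cases hin : i ≤ p ∧ p + 2 * Tree'.size (Tree'.node a cs) ≤ j
      · rw [if_pos hin, if_pos ⟨hii.trans hin.1, hin.2.trans hjj⟩]
        exact .refl
      · rw [if_neg hin]
        split
        · exact (ReflTransGen.single (delStep_singleton_node a cs)).trans
            (dels_cutF i j (p + 1) cs)
        · exact cutF_dels_cutF hii hjj (p + 1) cs
theorem cutF_dels_cutF {i i' j j' : ℕ} (hii : i' ≤ i) (hjj : j ≤ j') (p : ℕ) (F : Forest α) :
    Dels (cutF i' j' p F) (cutF i j p F) :=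
  match F with
  | [] => .refl
  | t :: ts => by
      rw [cutF, cutF]
      exact (cutT_dels_cutT hii hjj p t).append (cutF_dels_cutF hii hjj (p + 2 * Tree'.size t) ts)
end

end Subforest

/-- Monotonicity of the similarity matrix: enlarging the subforest `T2[i, j) ⊆ T2[i', j')`
(i.e. `i' ≤ i ≤ j ≤ j'`) does not decrease the similarity with `F`.  Hence each row of
`S(F)` is non-decreasing left to right and each column is non-increasing top to bottom. -/
theorem sim_subforest_monotone {α : Type} (T2 F : Forest α) (i i' j j' : ℕ)
    (hi' : 1 ≤ i') (hii : i' ≤ i) (hij : i ≤ j) (hjj : j ≤ j')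
    (hj' : j' ≤ 2 * Forest.size T2 + 1) :
    sim F (subforest T2 i j) ≤ sim F (subforest T2 i' j') :=
  sim_le_sim_of_dels F (cutF_dels_cutF hii hjj 1 T2)
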